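/- arXiv:2405.13804 — 5 statements merged into one kernel-verified Lean document; each statement's English description precedes it below -/
import Mathlib

section
/- If positive integers N_1,...,N_d with product N = ∏ N_i satisfy T·N ≥ N − ∏_{i=1}^d (N_i − 1) for some 0 ≤ T < 1, then N^{1/d} ≥ 1/(1 − (1−T)^{1/d}). -/
open Finset

/-- Mahler-type inequality: superadditivity of the geometric mean. -/
lemma mahler_aux (d : ℕ) (hd : 0 < d) (a : Fin d → ℝ) (ha : ∀ i, 1 ≤ a i) :
    (∏ i, (a i - 1)) ^ ((1 : ℝ) / d) + 1 ≤ (∏ i, a i) ^ ((1 : ℝ) / d) := by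
  have hd' : (0 : ℝ) < d := by exact_mod_cast hd
  have hapos : ∀ i, (0 : ℝ) < a i := fun i => lt_of_lt_of_le one_pos (ha i)
  have hwsum : ∑ _i : Fin d, (1 : ℝ) / d = 1 := by
    rw [Finset.sum_const, Finset.card_univ, Fintype.card_fin, nsmul_eq_mul]
    field_simp
  have hwnn : ∀ i ∈ Finset.univ (α := Fin d), (0 : ℝ) ≤ 1 / d := fun i _ => by positivity
  have h1 := Real.geom_mean_le_arith_mean_weighted Finset.univ (fun _ => (1 : ℝ) / d)
      (fun i => (a i - 1) / a i) hwnn hwsum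
      (fun i _ => div_nonneg (by linarith [ha i]) (hapos i).le)
  have h2 := Real.geom_mean_le_arith_mean_weighted Finset.univ (fun _ => (1 : ℝ) / d)
      (fun i => 1 / a i) hwnn hwsum
      (fun i _ => div_nonneg one_pos.le (hapos i).le)
  have hsum : (∑ i : Fin d, (1 : ℝ) / d * ((a i - 1) / a i))
      + ∑ i : Fin d, (1 : ℝ) / d * (1 / a i) = 1 := by
    rw [← Finset.sum_add_distrib]
    calc ∑ i : Fin d, ((1 : ℝ) / d * ((a i - 1) / a i) + (1 : ℝ) / d * (1 / a i))
        = ∑ _i : Fin d, (1 : ℝ) / d := by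
          refine Finset.sum_congr rfl fun i _ => ?_
          have h := (hapos i).ne'
          field_simp
          ring
      _ = 1 := hwsum
  have key : (∏ i : Fin d, ((a i - 1) / a i) ^ ((1 : ℝ) / d))
      + (∏ i : Fin d, (1 / a i) ^ ((1 : ℝ) / d)) ≤ 1 := by linarith
  set A : ℝ := (∏ i, a i) ^ ((1 : ℝ) / d) with hA
  have hApos : 0 < A := Real.rpow_pos_of_pos (Finset.prod_pos fun i _ => hapos i) _
  have e1 : A * (∏ i : Fin d, ((a i - 1) / a i) ^ ((1 : ℝ) / d))
      = (∏ i, (a i - 1)) ^ ((1 : ℝ) / d) := by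
    rw [hA, ← Real.finset_prod_rpow _ _ (fun i _ => (hapos i).le),
      ← Real.finset_prod_rpow _ (fun i => a i - 1) (fun i _ => by linarith [ha i]),
      ← Finset.prod_mul_distrib]
    refine Finset.prod_congr rfl fun i _ => ?_
    rw [← Real.mul_rpow (hapos i).le (div_nonneg (by linarith [ha i]) (hapos i).le),
      mul_comm (a i), div_mul_cancel₀ _ (hapos i).ne']
  have e2 : A * (∏ i : Fin d, (1 / a i) ^ ((1 : ℝ) / d)) = 1 := by
    rw [hA, ← Real.finset_prod_rpow _ _ (fun i _ => (hapos i).le),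
      ← Finset.prod_mul_distrib]
    have : ∀ i ∈ Finset.univ (α := Fin d),
        a i ^ ((1:ℝ)/d) * (1 / a i) ^ ((1:ℝ)/d) = 1 := by
      intro i _
      rw [← Real.mul_rpow (hapos i).le (div_nonneg one_pos.le (hapos i).le),
        mul_one_div, div_self (hapos i).ne', Real.one_rpow]
    rw [Finset.prod_congr rfl this]
    simp
  calc (∏ i, (a i - 1)) ^ ((1 : ℝ) / d) + 1
      = A * ((∏ i : Fin d, ((a i - 1) / a i) ^ ((1 : ℝ) / d))
          + ∏ i : Fin d, (1 / a i) ^ ((1 : ℝ) / d)) := by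
        rw [mul_add, e1, e2]
    _ ≤ A * 1 := mul_le_mul_of_nonneg_left key hApos.le
    _ = A := mul_one A

/-- If positive integers `N i` with product `N` satisfy `T·N ≥ N − ∏ (N i − 1)` for `0 ≤ T < 1`,
then `N^(1/d) ≥ 1/(1 − (1 − T)^(1/d))`. -/
theorem prodN_rpow_ge (d : ℕ) (hd : 0 < d) (N : Fin d → ℕ) (hN : ∀ i, 0 < N i)
    (T : ℝ) (hT0 : 0 ≤ T) (hT1 : T < 1)
    (h : ((∏ i, N i : ℕ) : ℝ) - ∏ i, ((N i : ℝ) - 1) ≤ T * ((∏ i, N i : ℕ) : ℝ)) :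
    1 / (1 - (1 - T) ^ ((1 : ℝ) / d)) ≤ ((∏ i, N i : ℕ) : ℝ) ^ ((1 : ℝ) / d) := by
  have hd' : (0 : ℝ) < d := by exact_mod_cast hd
  set P : ℝ := ((∏ i, N i : ℕ) : ℝ) with hP
  have hPpos : 0 < P := by
    rw [hP]
    exact_mod_cast Finset.prod_pos fun i _ => hN i
  have hPcast : P = ∏ i, (N i : ℝ) := by rw [hP]; push_cast; ring
  have ha : ∀ i, (1 : ℝ) ≤ (N i : ℝ) := fun i => by exact_mod_cast hN i
  have hkey : (1 - T) * P ≤ ∏ i, ((N i : ℝ) - 1) := by nlinarith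
  have hmahler := mahler_aux d hd (fun i => (N i : ℝ)) ha
  rw [← hPcast] at hmahler
  have hTprod : ((1 - T) * P) ^ ((1 : ℝ) / d) ≤ (∏ i, ((N i : ℝ) - 1)) ^ ((1 : ℝ) / d) :=
    Real.rpow_le_rpow (by nlinarith) hkey (by positivity)
  have hsplit : ((1 - T) * P) ^ ((1 : ℝ) / d)
      = (1 - T) ^ ((1 : ℝ) / d) * P ^ ((1 : ℝ) / d) :=
    Real.mul_rpow (by linarith) hPpos.le
  have hmain : 1 + (1 - T) ^ ((1 : ℝ) / d) * P ^ ((1 : ℝ) / d) ≤ P ^ ((1 : ℝ) / d) := by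
    rw [← hsplit]; linarith
  rcases eq_or_lt_of_le hT0 with hT | hT
  · -- T = 0 : LHS is 1/0 = 0
    rw [← hT]
    simp only [sub_zero, Real.one_rpow, sub_self, div_zero]
    positivity
  · have hlt : (1 - T) ^ ((1 : ℝ) / d) < 1 :=
      Real.rpow_lt_one (by linarith) (by linarith) (by positivity)
    rw [div_le_iff₀ (by linarith)]
    nlinarith [Real.rpow_nonneg hPpos.le ((1:ℝ)/d)]
end

section
/- Let d ≥ 1 and β ≥ 1 be integers, let B be a partition of {1,...,d} into β nonempty blocks, and let N_1,...,N_d be positive integers with product N. Then ∏_{b ∈ B} (∏_{i ∈ b} N_i − 1) ≤ (N^{1/β} − 1)^β. -/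
/-- For a partition `B` of `{1,...,d}` into `β` nonempty blocks and positive integers `N i`
with product `N`: `∏_{b ∈ B} (∏_{i ∈ b} N i − 1) ≤ (N^(1/β) − 1)^β`. -/
theorem prod_blocks_sub_one_le (d : ℕ) (hd : 0 < d) (β : ℕ) (hβ1 : 1 ≤ β)
    (B : Finset (Finset (Fin d))) (hcard : B.card = β)
    (hne : ∀ b ∈ B, b.Nonempty)
    (hdisj : (B : Set (Finset (Fin d))).PairwiseDisjoint id)
    (hcover : B.biUnion id = Finset.univ)
    (N : Fin d → ℕ) (hN : ∀ i, 0 < N i) :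
    ∏ b ∈ B, ((∏ i ∈ b, (N i : ℝ)) - 1) ≤
      (((∏ i, N i : ℕ) : ℝ) ^ ((1 : ℝ) / β) - 1) ^ (β : ℕ) := by
  set x : Finset (Fin d) → ℝ := fun b => ∏ i ∈ b, (N i : ℝ) with hx
  have hβ0 : (0:ℝ) < β := by exact_mod_cast hβ1
  have hx1 : ∀ b ∈ B, (1:ℝ) ≤ x b := by
    intro b _
    calc (1:ℝ) = ∏ _i ∈ b, 1 := by rw [Finset.prod_const_one]
      _ ≤ ∏ i ∈ b, (N i : ℝ) := Finset.prod_le_prod (fun i _ => zero_le_one)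
            (fun i _ => Nat.one_le_cast.mpr (hN i))
  have hxpos : ∀ b ∈ B, (0:ℝ) < x b := fun b hb => lt_of_lt_of_le one_pos (hx1 b hb)
  set P : ℝ := ∏ b ∈ B, (x b - 1) with hP
  have hPnn : 0 ≤ P := Finset.prod_nonneg fun b hb => by linarith [hx1 b hb]
  set Np : ℝ := ∏ b ∈ B, x b with hNp
  have hNppos : 0 < Np := Finset.prod_pos hxpos
  have hNcast : ((∏ i, N i : ℕ) : ℝ) = Np := by
    push_cast
    rw [← hcover, Finset.prod_biUnion hdisj]
    rfl
  -- AM-GM applied twice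
  have hw : ∀ b ∈ B, (0:ℝ) ≤ 1 / β := fun _ _ => by positivity
  have hw' : ∑ _b ∈ B, (1:ℝ) / β = 1 := by
    rw [Finset.sum_const, hcard, nsmul_eq_mul]
    field_simp
  have h1 := Real.geom_mean_le_arith_mean_weighted B (fun _ => 1/β) (fun b => 1 / x b)
    hw hw' (fun b hb => by positivity)
  have h2 := Real.geom_mean_le_arith_mean_weighted B (fun _ => 1/β) (fun b => (x b - 1) / x b)
    hw hw' (fun b hb => div_nonneg (by linarith [hx1 b hb]) (hxpos b hb).le)
  have hsum : (∑ b ∈ B, 1/(β:ℝ) * (1 / x b)) + (∑ b ∈ B, 1/(β:ℝ) * ((x b - 1) / x b)) = 1 := by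
    rw [← Finset.sum_add_distrib]
    have heq : ∀ b ∈ B, 1/(β:ℝ) * (1 / x b) + 1/(β:ℝ) * ((x b - 1) / x b) = 1/(β:ℝ) := by
      intro b hb
      have hx0 : x b ≠ 0 := (hxpos b hb).ne'
      have h : 1 / x b + (x b - 1) / x b = 1 := by field_simp; ring
      rw [← mul_add, h, mul_one]
    rw [Finset.sum_congr rfl heq]
    exact hw'
  -- rewrite the products
  have hprod1 : ∏ b ∈ B, (1 / x b) ^ ((1:ℝ)/β) = (1/Np) ^ ((1:ℝ)/β) := by
    rw [Real.finset_prod_rpow B _ (fun b hb => by positivity), Finset.prod_div_distrib,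
      Finset.prod_const_one]
  have hprod2 : ∏ b ∈ B, ((x b - 1) / x b) ^ ((1:ℝ)/β) = (P/Np) ^ ((1:ℝ)/β) := by
    rw [Real.finset_prod_rpow B _
      (fun b hb => div_nonneg (by linarith [hx1 b hb]) (hxpos b hb).le),
      Finset.prod_div_distrib]
  rw [hprod1] at h1
  rw [hprod2] at h2
  have hkey : (1/Np) ^ ((1:ℝ)/β) + (P/Np) ^ ((1:ℝ)/β) ≤ 1 := by
    calc _ ≤ (∑ b ∈ B, 1/(β:ℝ) * (1 / x b)) + (∑ b ∈ B, 1/(β:ℝ) * ((x b - 1) / x b)) :=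
            add_le_add h1 h2
      _ = 1 := hsum
  rw [Real.div_rpow zero_le_one hNppos.le, Real.div_rpow hPnn hNppos.le,
    Real.one_rpow, ← add_div, div_le_one (Real.rpow_pos_of_pos hNppos _)] at hkey
  -- conclude
  have hPle : P ^ ((1:ℝ)/β) ≤ Np ^ ((1:ℝ)/β) - 1 := by linarith
  have hfinal : P ≤ (Np ^ ((1:ℝ)/β) - 1) ^ (β:ℕ) := by
    have := pow_le_pow_left₀ (Real.rpow_nonneg hPnn _) hPle β
    rwa [← Real.rpow_natCast (P ^ ((1:ℝ)/β)) β, ← Real.rpow_mul hPnn,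
      one_div_mul_cancel hβ0.ne', Real.rpow_one] at this
  rw [hNcast]
  exact hfinal
end

section
/- For 2-dimensional Gaussians with covariance matrices having eigenvalues λ_1, λ_2 and λ_1', λ_2' and rotation angles α, α', the trace term Tr(Σ + Σ' − 2(Σ^{1/2}Σ'Σ^{1/2})^{1/2}) equals λ_1 + λ_1' + λ_2 + λ_2' − 2√((λ_1λ_1' + λ_2λ_2')cos²(α − α') + (λ_1λ_2' + λ_2λ_1')sin²(α − α') + 2√(λ_1λ_1'λ_2λ_2')). -/
open Real

/-- The 2×2 rotation matrix by angle `θ`. -/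
noncomputable def rotMat (θ : ℝ) : Matrix (Fin 2) (Fin 2) ℝ :=
  !![Real.cos θ, -Real.sin θ; Real.sin θ, Real.cos θ]

lemma diag_two (a b : ℝ) : Matrix.diagonal ![a, b] = !![a, 0; 0, b] := by
  ext i j
  fin_cases i <;> fin_cases j <;> simp [Matrix.diagonal]

lemma transpose_two (a b c d : ℝ) : (!![a, b; c, d] : Matrix (Fin 2) (Fin 2) ℝ).transpose
    = !![a, c; b, d] := by
  ext i j
  fin_cases i <;> fin_cases j <;> simp

lemma rot_diag (θ a b : ℝ) :
    rotMat θ * Matrix.diagonal ![a, b] * (rotMat θ).transpose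
      = !![a * Real.cos θ ^ 2 + b * Real.sin θ ^ 2,
            (a - b) * Real.sin θ * Real.cos θ;
          (a - b) * Real.sin θ * Real.cos θ,
            a * Real.sin θ ^ 2 + b * Real.cos θ ^ 2] := by
  rw [rotMat, diag_two, transpose_two, Matrix.mul_fin_two, Matrix.mul_fin_two]
  congr 1 <;> ring

lemma psd_trace_nonneg (A : Matrix (Fin 2) (Fin 2) ℝ) (hA : A.PosSemidef) :
    0 ≤ A.trace := by
  have h0 := hA.dotProduct_mulVec_nonneg ![1, 0]
  have h1 := hA.dotProduct_mulVec_nonneg ![0, 1]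
  simp [dotProduct, Matrix.mulVec, Fin.sum_univ_two, Matrix.trace_fin_two] at h0 h1 ⊢
  linarith

lemma psd_det_nonneg (A : Matrix (Fin 2) (Fin 2) ℝ) (hA : A.PosSemidef) :
    0 ≤ A.det := by
  rw [hA.1.det_eq_prod_eigenvalues]
  exact Finset.prod_nonneg fun i _ => hA.eigenvalues_nonneg i

/-- For a 2×2 PSD matrix, the trace is the square root of `tr(A²) + 2√(det(A²))`. -/
lemma trace_psd_sqrt (A : Matrix (Fin 2) (Fin 2) ℝ) (hA : A.PosSemidef) :
    A.trace = Real.sqrt ((A * A).trace + 2 * Real.sqrt ((A * A).det)) := by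
  have hdet : (A * A).det = A.det ^ 2 := by rw [Matrix.det_mul]; ring
  have htr : (A * A).trace = A.trace ^ 2 - 2 * A.det := by
    simp [Matrix.trace_fin_two, Matrix.det_fin_two, Matrix.mul_apply, Fin.sum_univ_two]
    ring
  rw [hdet, Real.sqrt_sq (psd_det_nonneg A hA), htr]
  have : A.trace ^ 2 - 2 * A.det + 2 * A.det = A.trace ^ 2 := by ring
  rw [this, Real.sqrt_sq (psd_trace_nonneg A hA)]

/-- For 2-dimensional Gaussians with covariance matrices with eigenvalues `λ₁, λ₂` and `λ₁', λ₂'`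
and rotation angles `α, α'`, the trace term `Tr(S + S' − 2(S^{1/2}S'S^{1/2})^{1/2})` equals
`λ₁ + λ₁' + λ₂ + λ₂' − 2√((λ₁λ₁' + λ₂λ₂')cos²(α−α') + (λ₁λ₂' + λ₂λ₁')sin²(α−α') + 2√(λ₁λ₁'λ₂λ₂'))`.
Here `Shalf` is the PSD square root of `S` and `A` the PSD square root of `Shalf * S' * Shalf`. -/
theorem gaussian2d_trace_term (l1 l2 l1' l2' α α' : ℝ)
    (hl1 : 0 ≤ l1) (hl2 : 0 ≤ l2) (hl1' : 0 ≤ l1') (hl2' : 0 ≤ l2')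
    (S S' Shalf A : Matrix (Fin 2) (Fin 2) ℝ)
    (hS : S = rotMat α * Matrix.diagonal ![l1, l2] * (rotMat α).transpose)
    (hS' : S' = rotMat α' * Matrix.diagonal ![l1', l2'] * (rotMat α').transpose)
    (hhalf : Shalf.PosSemidef) (hhalfsq : Shalf * Shalf = S)
    (hA : A.PosSemidef) (hAsq : A * A = Shalf * S' * Shalf) :
    Matrix.trace (S + S' - (2 : ℝ) • A)
      = l1 + l1' + l2 + l2' -
        2 * Real.sqrt ((l1 * l1' + l2 * l2') * Real.cos (α - α') ^ 2
          + (l1 * l2' + l2 * l1') * Real.sin (α - α') ^ 2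
          + 2 * Real.sqrt (l1 * l1' * l2 * l2')) := by
  have pyth : Real.sin α ^ 2 + Real.cos α ^ 2 = 1 := Real.sin_sq_add_cos_sq α
  have pyth' : Real.sin α' ^ 2 + Real.cos α' ^ 2 = 1 := Real.sin_sq_add_cos_sq α'
  rw [rot_diag] at hS hS'
  have htrS : S.trace = l1 + l2 := by
    rw [hS, Matrix.trace_fin_two_of]; nlinarith [pyth]
  have htrS' : S'.trace = l1' + l2' := by
    rw [hS', Matrix.trace_fin_two_of]; nlinarith [pyth']
  have htrAA : (A * A).trace = (S * S').trace := by
    rw [hAsq, Matrix.trace_mul_cycle, hhalfsq]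
  have htrSS' : (S * S').trace
      = (l1 * l1' + l2 * l2') * Real.cos (α - α') ^ 2
        + (l1 * l2' + l2 * l1') * Real.sin (α - α') ^ 2 := by
    rw [hS, hS', Matrix.mul_fin_two, Matrix.trace_fin_two_of, Real.cos_sub, Real.sin_sub]
    nlinarith [pyth, pyth']
  have hdetAA : (A * A).det = l1 * l1' * l2 * l2' := by
    have hdS : S.det = l1 * l2 := by
      rw [hS, Matrix.det_fin_two_of]
      linear_combination (l1 * l2 * (Real.sin α ^ 2 + Real.cos α ^ 2 + 1)) * pyth
    have hdS' : S'.det = l1' * l2' := by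
      rw [hS', Matrix.det_fin_two_of]
      linear_combination (l1' * l2' * (Real.sin α' ^ 2 + Real.cos α' ^ 2 + 1)) * pyth'
    have h : (A * A).det = S.det * S'.det := by
      rw [hAsq, Matrix.det_mul, Matrix.det_mul, ← hhalfsq, Matrix.det_mul]
      ring
    rw [h, hdS, hdS']; ring
  have htrA : A.trace
      = Real.sqrt ((l1 * l1' + l2 * l2') * Real.cos (α - α') ^ 2
          + (l1 * l2' + l2 * l1') * Real.sin (α - α') ^ 2
          + 2 * Real.sqrt (l1 * l1' * l2 * l2')) := by
    rw [trace_psd_sqrt A hA, htrAA, htrSS', hdetAA]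
  simp only [Matrix.trace_sub, Matrix.trace_add, Matrix.trace_smul, htrS, htrS', htrA,
    smul_eq_mul]
  ring
end

section
/- For all nonnegative reals a, b, ã, b̃ and angles α, α': √(a²cos²α + b²sin²α)·√(ã²cos²α' + b̃²sin²α') + √(a²sin²α + b²cos²α)·√(ã²sin²α' + b̃²cos²α') ≥ √((aã + bb̃)²cos²(α−α') + (ab̃ + bã)²sin²(α−α')). -/
lemma sqrt_tri_aux (x1 y1 x2 y2 : ℝ) :
    Real.sqrt ((x1 + x2) ^ 2 + (y1 + y2) ^ 2) ≤
      Real.sqrt (x1 ^ 2 + y1 ^ 2) + Real.sqrt (x2 ^ 2 + y2 ^ 2) := by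
  have hadd : (⟨x1, y1⟩ + ⟨x2, y2⟩ : ℂ) = ⟨x1 + x2, y1 + y2⟩ := by
    apply Complex.ext <;> simp
  have h := norm_add_le (⟨x1, y1⟩ : ℂ) ⟨x2, y2⟩
  rw [hadd] at h
  simpa [Complex.norm_def, Complex.normSq_mk, sq] using h

/-- For nonnegative reals `a, b, ta, tb` and angles `α, α'`:
`√(a²cos²α + b²sin²α)·√(ta²cos²α' + tb²sin²α') + √(a²sin²α + b²cos²α)·√(ta²sin²α' + tb²cos²α')
  ≥ √((a·ta + b·tb)²cos²(α−α') + (a·tb + b·ta)²sin²(α−α'))`. -/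
theorem sqrt_prod_ge (a b ta tb α α' : ℝ)
    (ha : 0 ≤ a) (hb : 0 ≤ b) (hta : 0 ≤ ta) (htb : 0 ≤ tb) :
    Real.sqrt ((a * ta + b * tb) ^ 2 * Real.cos (α - α') ^ 2
        + (a * tb + b * ta) ^ 2 * Real.sin (α - α') ^ 2) ≤
      Real.sqrt (a ^ 2 * Real.cos α ^ 2 + b ^ 2 * Real.sin α ^ 2) *
          Real.sqrt (ta ^ 2 * Real.cos α' ^ 2 + tb ^ 2 * Real.sin α' ^ 2)
        + Real.sqrt (a ^ 2 * Real.sin α ^ 2 + b ^ 2 * Real.cos α ^ 2) *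
          Real.sqrt (ta ^ 2 * Real.sin α' ^ 2 + tb ^ 2 * Real.cos α' ^ 2) := by
  set c := Real.cos α
  set s := Real.sin α
  set c' := Real.cos α'
  set s' := Real.sin α'
  set p1 : ℝ := a * ta * c * c' + b * tb * s * s' with hp1
  set q1 : ℝ := b * ta * s * c' - a * tb * c * s' with hq1
  set p2 : ℝ := a * ta * s * s' + b * tb * c * c' with hp2
  set q2 : ℝ := a * tb * s * c' - b * ta * c * s' with hq2
  have hL : (a * ta + b * tb) ^ 2 * Real.cos (α - α') ^ 2
      + (a * tb + b * ta) ^ 2 * Real.sin (α - α') ^ 2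
      = (p1 + p2) ^ 2 + (q1 + q2) ^ 2 := by
    rw [Real.cos_sub, Real.sin_sub, hp1, hq1, hp2, hq2]; ring
  have h1 : Real.sqrt (a ^ 2 * c ^ 2 + b ^ 2 * s ^ 2) *
      Real.sqrt (ta ^ 2 * c' ^ 2 + tb ^ 2 * s' ^ 2) = Real.sqrt (p1 ^ 2 + q1 ^ 2) := by
    rw [← Real.sqrt_mul (by positivity)]
    congr 1; rw [hp1, hq1]; ring
  have h2 : Real.sqrt (a ^ 2 * s ^ 2 + b ^ 2 * c ^ 2) *
      Real.sqrt (ta ^ 2 * s' ^ 2 + tb ^ 2 * c' ^ 2) = Real.sqrt (p2 ^ 2 + q2 ^ 2) := by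
    rw [← Real.sqrt_mul (by positivity)]
    congr 1; rw [hp2, hq2]; ring
  rw [hL, h1, h2]
  exact sqrt_tri_aux p1 q1 p2 q2
end

section
/- For a, b, ε > 0 and α ∈ (0, π/2), set δ'_α = ε/cos α + √2 ε cos α and δ'_β = ε/sin α + √2 ε sin α. If a ≥ δ'_α and b ≥ δ'_β, then √((a − δ'_α)²cos²α + (b − δ'_β)²sin²α) ≤ √(a²cos²α + b²sin²α) − ε. -/
open Real

private lemma key_poly (x y ε t c s S : ℝ) (hε : 0 < ε) (ht2 : t ^ 2 = 2) (ht1 : 1 ≤ t)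
    (hcs : c ^ 2 + s ^ 2 = 1)
    (hx : ε + t * ε * c ^ 2 ≤ x) (hy : ε + t * ε * s ^ 2 ≤ y)
    (hS2 : S ^ 2 = x ^ 2 + y ^ 2) (hS : S ≤ x + y) :
    (x - (ε + t * ε * c ^ 2)) ^ 2 + (y - (ε + t * ε * s ^ 2)) ^ 2 ≤ (S - ε) ^ 2 := by
  have h1 : 0 ≤ t * ε * (x - (ε + t * ε * c ^ 2)) * c ^ 2 :=
    mul_nonneg (mul_nonneg (mul_nonneg (by linarith) hε.le) (by linarith)) (sq_nonneg c)
  have h2 : 0 ≤ t * ε * (y - (ε + t * ε * s ^ 2)) * s ^ 2 :=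
    mul_nonneg (mul_nonneg (mul_nonneg (by linarith) hε.le) (by linarith)) (sq_nonneg s)
  have h3 : 0 ≤ ε ^ 2 * (c ^ 2 - s ^ 2) ^ 2 := mul_nonneg (sq_nonneg ε) (sq_nonneg (c ^ 2 - s ^ 2))
  have h4 : 0 ≤ 2 * ε * ((x + y) - S) := by nlinarith
  have hexp : (S - ε) ^ 2 - ((x - (ε + t * ε * c ^ 2)) ^ 2 + (y - (ε + t * ε * s ^ 2)) ^ 2)
      = 2 * ε * ((x + y) - S) + 2 * (t * ε * (x - (ε + t * ε * c ^ 2)) * c ^ 2)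
        + 2 * (t * ε * (y - (ε + t * ε * s ^ 2)) * s ^ 2) + ε ^ 2 * (c ^ 2 - s ^ 2) ^ 2 := by
    linear_combination hS2 + ε ^ 2 * (c ^ 4 + s ^ 4) * ht2 + ε ^ 2 * (c ^ 2 + s ^ 2 + 1) * hcs
  linarith [h1, h2, h3, h4, hexp]

set_option maxHeartbeats 1000000 in
/-- For `a, b, ε > 0`, `α ∈ (0, π/2)`, with `δ'_α = ε/cos α + √2 ε cos α` and
`δ'_β = ε/sin α + √2 ε sin α`: if `a ≥ δ'_α` and `b ≥ δ'_β` then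
`√((a − δ'_α)²cos²α + (b − δ'_β)²sin²α) ≤ √(a²cos²α + b²sin²α) − ε`. -/
theorem sqrt_sub_shift_le (a b ε α : ℝ) (ha : 0 < a) (hb : 0 < b) (hε : 0 < ε)
    (hα0 : 0 < α) (hα1 : α < Real.pi / 2)
    (hage : ε / Real.cos α + Real.sqrt 2 * ε * Real.cos α ≤ a)
    (hbge : ε / Real.sin α + Real.sqrt 2 * ε * Real.sin α ≤ b) :
    Real.sqrt ((a - (ε / Real.cos α + Real.sqrt 2 * ε * Real.cos α)) ^ 2 * Real.cos α ^ 2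
        + (b - (ε / Real.sin α + Real.sqrt 2 * ε * Real.sin α)) ^ 2 * Real.sin α ^ 2) ≤
      Real.sqrt (a ^ 2 * Real.cos α ^ 2 + b ^ 2 * Real.sin α ^ 2) - ε := by
  have hc : 0 < Real.cos α := Real.cos_pos_of_mem_Ioo ⟨by linarith [Real.pi_pos], hα1⟩
  have hs : 0 < Real.sin α := Real.sin_pos_of_pos_of_lt_pi hα0 (by linarith [Real.pi_pos])
  obtain ⟨c, hc_def⟩ : ∃ c, Real.cos α = c := ⟨_, rfl⟩
  obtain ⟨s, hs_def⟩ : ∃ s, Real.sin α = s := ⟨_, rfl⟩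
  obtain ⟨t, ht_def⟩ : ∃ t, Real.sqrt 2 = t := ⟨_, rfl⟩
  rw [hc_def] at hc hage ⊢
  rw [hs_def] at hs hbge ⊢
  rw [ht_def] at hage hbge ⊢
  have hcs : c ^ 2 + s ^ 2 = 1 := by
    rw [← hc_def, ← hs_def, add_comm]; exact Real.sin_sq_add_cos_sq α
  have ht2 : t ^ 2 = 2 := by rw [← ht_def]; exact Real.sq_sqrt (by norm_num)
  have ht1 : 1 ≤ t := by nlinarith [Real.sqrt_nonneg 2, ht_def]
  obtain ⟨x, hx_def⟩ : ∃ x, a * c = x := ⟨_, rfl⟩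
  obtain ⟨y, hy_def⟩ : ∃ y, b * s = y := ⟨_, rfl⟩
  have hx : ε + t * ε * c ^ 2 ≤ x := by
    have := mul_le_mul_of_nonneg_right hage hc.le
    calc ε + t * ε * c ^ 2 = (ε / c + t * ε * c) * c := by field_simp
    _ ≤ x := hx_def ▸ this
  have hy : ε + t * ε * s ^ 2 ≤ y := by
    have := mul_le_mul_of_nonneg_right hbge hs.le
    calc ε + t * ε * s ^ 2 = (ε / s + t * ε * s) * s := by field_simp
    _ ≤ y := hy_def ▸ this
  have htεc : 0 ≤ t * ε * c ^ 2 :=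
    mul_nonneg (mul_nonneg (by linarith) hε.le) (sq_nonneg c)
  have hεx : ε ≤ x := by linarith
  have hεy : ε ≤ y := by nlinarith [mul_nonneg (mul_nonneg (show (0:ℝ) ≤ t by linarith) hε.le) (sq_nonneg s)]
  have hS : x ^ 2 + y ^ 2 = a ^ 2 * c ^ 2 + b ^ 2 * s ^ 2 := by rw [← hx_def, ← hy_def]; ring
  have hL : (a - (ε / c + t * ε * c)) ^ 2 * c ^ 2 + (b - (ε / s + t * ε * s)) ^ 2 * s ^ 2
      = (x - (ε + t * ε * c ^ 2)) ^ 2 + (y - (ε + t * ε * s ^ 2)) ^ 2 := by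
    rw [← hx_def, ← hy_def]
    field_simp
  rw [hL, ← hS]
  have hSnn : (0:ℝ) ≤ x ^ 2 + y ^ 2 := by positivity
  have hsqS : x ≤ Real.sqrt (x ^ 2 + y ^ 2) := by
    have h := Real.sqrt_le_sqrt (show x ^ 2 ≤ x ^ 2 + y ^ 2 by nlinarith)
    rwa [Real.sqrt_sq (by linarith : 0 ≤ x)] at h
  have hsqS2 : Real.sqrt (x ^ 2 + y ^ 2) ≤ x + y := by
    have h := Real.sqrt_le_sqrt (show x ^ 2 + y ^ 2 ≤ (x + y) ^ 2 by
      nlinarith [mul_nonneg (le_trans hε.le hεx) (le_trans hε.le hεy)])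
    rwa [Real.sqrt_sq (by linarith : 0 ≤ x + y)] at h
  have hsq : Real.sqrt (x ^ 2 + y ^ 2) ^ 2 = x ^ 2 + y ^ 2 := Real.sq_sqrt hSnn
  have hεle : ε ≤ Real.sqrt (x ^ 2 + y ^ 2) := le_trans hεx hsqS
  have hkey := key_poly x y ε t c s (Real.sqrt (x ^ 2 + y ^ 2)) hε ht2 ht1 hcs hx hy hsq hsqS2
  calc Real.sqrt ((x - (ε + t * ε * c ^ 2)) ^ 2 + (y - (ε + t * ε * s ^ 2)) ^ 2)
      ≤ Real.sqrt ((Real.sqrt (x ^ 2 + y ^ 2) - ε) ^ 2) := Real.sqrt_le_sqrt hkey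
    _ = Real.sqrt (x ^ 2 + y ^ 2) - ε := Real.sqrt_sq (by linarith)
end
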